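/- arXiv:2602.22202 — 10 statements merged into one kernel-verified Lean document; each statement's English description precedes it below -/
import Mathlib

section
/- For every positive integer m, there exist four pairwise orthogonal vectors in ℤ⁴ each of squared length m. (Equivalently, ℤ⁴ contains a 4-dimensional cube of side length √m for every m ≥ 1.) -/
theorem stmt_1 (m : ℕ) (hm : 0 < m) :
    ∃ V : Fin 4 → Fin 4 → ℤ,
      (∀ i j : Fin 4, i ≠ j → ∑ k, V i k * V j k = 0) ∧
      (∀ i : Fin 4, ∑ k, V i k * V i k = (m : ℤ)) := by
  obtain ⟨a, b, c, d, h⟩ := Nat.sum_four_squares m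
  set a' := (a : ℤ); set b' := (b : ℤ); set c' := (c : ℤ); set d' := (d : ℤ)
  have hm' : a' * a' + b' * b' + c' * c' + d' * d' = (m : ℤ) := by
    have := congrArg (Nat.cast : ℕ → ℤ) h
    push_cast at this
    linarith [this]
  refine ⟨![![a', b', c', d'], ![-b', a', -d', c'], ![-c', d', a', -b'], ![-d', -c', b', a']], ?_, ?_⟩
  · intro i j hij
    fin_cases i <;> fin_cases j <;> simp_all [Fin.sum_univ_four] <;> ring
  · intro i
    fin_cases i <;> simp [Fin.sum_univ_four] <;> linarith [hm']
end

section
/- The integer 3 is a sum of three squares, but there do not exist two orthogonal vectors in ℤ³ each of squared length 3. Hence J(2,3) is a proper subset of J(1,3). -/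
lemma aux_sq3 (a b c : ℤ) (h : a * a + b * b + c * c = 3) :
    a * a = 1 ∧ b * b = 1 ∧ c * c = 1 := by
  have ha1 : -1 ≤ a ∧ a ≤ 1 := by
    constructor <;> nlinarith [mul_self_nonneg b, mul_self_nonneg c, mul_self_nonneg (a - 1), mul_self_nonneg (a + 1)]
  have hb1 : -1 ≤ b ∧ b ≤ 1 := by
    constructor <;> nlinarith [mul_self_nonneg a, mul_self_nonneg c, mul_self_nonneg (b - 1), mul_self_nonneg (b + 1)]
  have hc1 : -1 ≤ c ∧ c ≤ 1 := by
    constructor <;> nlinarith [mul_self_nonneg a, mul_self_nonneg b, mul_self_nonneg (c - 1), mul_self_nonneg (c + 1)]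
  obtain ⟨ha, ha'⟩ := ha1; obtain ⟨hb, hb'⟩ := hb1; obtain ⟨hc, hc'⟩ := hc1
  interval_cases a <;> interval_cases b <;> interval_cases c <;> omega

lemma aux_noorth :
    ¬ ∃ v w : Fin 3 → ℤ, (∑ k, v k * w k = 0) ∧
        (∑ k, v k * v k = 3) ∧ (∑ k, w k * w k = 3) := by
  rintro ⟨v, w, h0, hv, hw⟩
  simp only [Fin.sum_univ_three] at h0 hv hw
  obtain ⟨hv0, hv1, hv2⟩ := aux_sq3 _ _ _ hv
  obtain ⟨hw0, hw1, hw2⟩ := aux_sq3 _ _ _ hw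
  rcases mul_self_eq_one_iff.mp hv0 with h | h <;>
    rcases mul_self_eq_one_iff.mp hv1 with h' | h' <;>
    rcases mul_self_eq_one_iff.mp hv2 with h'' | h'' <;>
    rcases mul_self_eq_one_iff.mp hw0 with g | g <;>
    rcases mul_self_eq_one_iff.mp hw1 with g' | g' <;>
    rcases mul_self_eq_one_iff.mp hw2 with g'' | g'' <;>
    rw [h, h', h'', g, g', g''] at h0 <;> norm_num at h0

theorem stmt_4 :
    (∃ a b c : ℤ, a ^ 2 + b ^ 2 + c ^ 2 = 3) ∧
    (¬ ∃ v w : Fin 3 → ℤ, (∑ k, v k * w k = 0) ∧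
        (∑ k, v k * v k = 3) ∧ (∑ k, w k * w k = 3)) ∧
    {m : ℕ | ∃ v w : Fin 3 → ℤ, (∑ k, v k * w k = 0) ∧
        (∑ k, v k * v k = (m : ℤ)) ∧ (∑ k, w k * w k = (m : ℤ))} ⊂
      {m : ℕ | ∃ a b c : ℤ, a ^ 2 + b ^ 2 + c ^ 2 = (m : ℤ)} := by
  refine ⟨⟨1, 1, 1, by norm_num⟩, aux_noorth, ?_⟩
  constructor
  · rintro m ⟨v, w, -, hv, -⟩
    refine ⟨v 0, v 1, v 2, ?_⟩
    simp only [Fin.sum_univ_three] at hv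
    nlinarith [hv]
  · intro hsub
    have h3 : (3 : ℕ) ∈ {m : ℕ | ∃ a b c : ℤ, a ^ 2 + b ^ 2 + c ^ 2 = (m : ℤ)} :=
      ⟨1, 1, 1, by norm_num⟩
    obtain ⟨v, w, h0, hv, hw⟩ := hsub h3
    exact aux_noorth ⟨v, w, h0, by exact_mod_cast hv, by exact_mod_cast hw⟩
end

section
/- If m is a positive integer such that there exist two orthogonal vectors in ℚ³ each of squared Euclidean length m, then m is a sum of two rational squares. -/
theorem stmt_5 (m : ℕ) (hm : 0 < m) (v w : Fin 3 → ℚ)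
    (horth : ∑ k, v k * w k = 0)
    (hv : ∑ k, v k * v k = (m : ℚ)) (hw : ∑ k, w k * w k = (m : ℚ)) :
    ∃ p q : ℚ, p ^ 2 + q ^ 2 = (m : ℚ) := by
  simp only [Fin.sum_univ_three] at horth hv hw
  set a := v 0 with ha
  set b := w 0 with hb
  set c := v 2 * w 0 - v 0 * w 2 with hc
  set d := v 0 * w 1 - v 1 * w 0 with hd
  have key : c ^ 2 + d ^ 2 = (m : ℚ) * (a ^ 2 + b ^ 2) := by
    rw [hc, hd, ha, hb]
    linear_combination (w 0)^2 * hv + (v 0)^2 * hw - 2 * (v 0) * (w 0) * horth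
  by_cases h : a ^ 2 + b ^ 2 = 0
  · have ha0 : a = 0 := by nlinarith [sq_nonneg a, sq_nonneg b]
    exact ⟨v 1, v 2, by rw [ha] at ha0; nlinarith [hv]⟩
  · refine ⟨(c * a + d * b) / (a ^ 2 + b ^ 2), (d * a - c * b) / (a ^ 2 + b ^ 2), ?_⟩
    field_simp
    linear_combination (a ^ 2 + b ^ 2) * key
end

section
/- The set of squared side lengths of 2-dimensional squares with vertices in ℤ³ equals the set of sums of two integer squares, i.e., J(2,3) = I₂. -/
/-!
Let `v ⊥ w` in `ℤ³` with `|v|² = |w|² = m` and `u = v ⨯₃ w`, so `|u|² = m²`. The matrix with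
columns `v`, `w`, `u / √m` is `√m` times an orthogonal matrix, so its rows also have squared
length `m`: `m (vᵢ² + wᵢ²) + uᵢ² = m²`. Let `q ≡ 3 mod 4` be a prime with `v_q(m) = e` odd.
As a sum of two squares, `sᵢ = vᵢ² + wᵢ²` has even `q`-adic valuation, so `v_q(m sᵢ)` is odd while
`v_q(uᵢ²)` and `v_q(m²) = 2e` are even; the ultrametric property then forces
`v_q(m sᵢ) > v_q(uᵢ²) = 2e`, i.e. `q^(e+1) ∣ sᵢ`. Summing, `q^(e+1) ∣ ∑ sᵢ = 2m`, which is absurd.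
-/

open Matrix

theorem padicValNat_add_of_lt {p a b : ℕ} [Fact p.Prime] (ha : a ≠ 0)
    (h : padicValNat p a < padicValNat p b) : padicValNat p (a + b) = padicValNat p a := by
  have hb : b ≠ 0 := by rintro rfl; simp at h
  have hval : padicValRat p a < padicValRat p b := by
    simpa only [padicValRat.of_nat, Nat.cast_lt] using h
  have := padicValRat.add_eq_of_lt (by positivity) (by positivity) (by positivity) hval
  rw [← Nat.cast_add, padicValRat.of_nat, padicValRat.of_nat] at this
  exact_mod_cast this

theorem even_padicValNat_sq_add_sq {q : ℕ} [Fact q.Prime] (hq : q % 4 = 3) (x y : ℕ) :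
    Even (padicValNat q (x ^ 2 + y ^ 2)) := by
  obtain h0 | h0 := eq_or_ne (x ^ 2 + y ^ 2) 0
  · simp [h0]
  by_cases hdvd : q ∣ x ^ 2 + y ^ 2
  · exact Nat.eq_sq_add_sq_iff.mp ⟨x, y, rfl⟩ q (Nat.mem_primeFactors.mpr ⟨Fact.out, hdvd, h0⟩) hq
  · simp [padicValNat.eq_zero_of_not_dvd hdvd]

theorem pow_padicValNat_succ_dvd_of_mul_add_sq_eq_sq {q m s t : ℕ} [Fact q.Prime] (hm : m ≠ 0)
    (hm_odd : Odd (padicValNat q m)) (hs_even : Even (padicValNat q s))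
    (h : m * s + t ^ 2 = m ^ 2) : q ^ (padicValNat q m + 1) ∣ s := by
  obtain rfl | hs := eq_or_ne s 0
  · exact dvd_zero _
  obtain rfl | ht := eq_or_ne t 0
  · have : s = m := Nat.eq_of_mul_eq_mul_left (Nat.pos_of_ne_zero hm) (by simpa [sq] using h)
    subst this
    exact absurd hs_even (Nat.not_even_iff_odd.mpr hm_odd)
  have hms : padicValNat q (m * s) = padicValNat q m + padicValNat q s := padicValNat.mul hm hs
  have hm2 : padicValNat q (m ^ 2) = 2 * padicValNat q m := padicValNat.pow m 2
  have ht2 : padicValNat q (t ^ 2) = 2 * padicValNat q t := padicValNat.pow t 2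
  obtain ⟨e, he⟩ := hm_odd
  obtain ⟨a, ha⟩ := hs_even
  refine (pow_dvd_pow q ?_).trans pow_padicValNat_dvd
  rcases lt_trichotomy (padicValNat q (m * s)) (padicValNat q (t ^ 2)) with hlt | heq | hgt
  · have := padicValNat_add_of_lt (by positivity) hlt
    rw [h] at this
    omega
  · omega
  · have := padicValNat_add_of_lt (by positivity) hgt
    rw [add_comm, h] at this
    omega

theorem mul_sq_add_sq_add_cross_sq {R : Type*} [CommRing R] {v w : Fin 3 → R} {m : R}
    (hvw : v ⬝ᵥ w = 0) (hv : v ⬝ᵥ v = m) (hw : w ⬝ᵥ w = m) (i : Fin 3) :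
    m * (v i ^ 2 + w i ^ 2) + (v ⨯₃ w) i ^ 2 = m ^ 2 := by
  simp only [dotProduct, Fin.sum_univ_three] at hvw hv hw
  fin_cases i <;> simp [cross_apply]
  · linear_combination (v 0 * w 0 - v 1 * w 1 - v 2 * w 2) * hvw + (m - w 0 ^ 2) * hv +
      (v 1 ^ 2 + v 2 ^ 2) * hw
  · linear_combination (v 1 * w 1 - v 2 * w 2 - v 0 * w 0) * hvw + (m - w 1 ^ 2) * hv +
      (v 2 ^ 2 + v 0 ^ 2) * hw
  · linear_combination (v 2 * w 2 - v 0 * w 0 - v 1 * w 1) * hvw + (m - w 2 ^ 2) * hv +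
      (v 0 ^ 2 + v 1 ^ 2) * hw

theorem exists_sq_add_sq_of_dotProduct_eq_zero {v w : Fin 3 → ℤ} {m : ℕ} (hvw : v ⬝ᵥ w = 0)
    (hv : v ⬝ᵥ v = m) (hw : w ⬝ᵥ w = m) : ∃ a b : ℤ, a ^ 2 + b ^ 2 = m := by
  obtain ⟨x, y, hxy⟩ : ∃ x y : ℕ, m = x ^ 2 + y ^ 2 := by
    refine Nat.eq_sq_add_sq_iff.mpr fun q hq hq3 => ?_
    have : Fact q.Prime := ⟨Nat.prime_of_mem_primeFactors hq⟩
    have hm : m ≠ 0 := (Nat.mem_primeFactors.mp hq).2.2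
    by_contra hm_even
    let s (i : Fin 3) : ℕ := (v i).natAbs ^ 2 + (w i).natAbs ^ 2
    have hdvd (i : Fin 3) : q ^ (padicValNat q m + 1) ∣ s i := by
      refine pow_padicValNat_succ_dvd_of_mul_add_sq_eq_sq hm (Nat.not_even_iff_odd.mp hm_even)
        (even_padicValNat_sq_add_sq hq3 _ _) (t := ((v ⨯₃ w) i).natAbs) ?_
      zify
      push_cast [s, sq_abs]
      exact mul_sq_add_sq_add_cross_sq hvw hv hw i
    have hsum : ∑ i, s i = 2 * m := by
      simp only [dotProduct, Fin.sum_univ_three] at hv hw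
      zify
      push_cast [s, sq_abs, Fin.sum_univ_three]
      linear_combination hv + hw
    have hcop : (q ^ (padicValNat q m + 1)).Coprime 2 :=
      Nat.Coprime.pow_left _ (Nat.coprime_two_right.mpr (Nat.odd_iff.mpr (by omega)))
    exact pow_succ_padicValNat_not_dvd hm
      (hcop.dvd_of_dvd_mul_left (hsum ▸ Finset.dvd_sum fun i _ => hdvd i))
  exact ⟨x, y, by rw [hxy]; push_cast; rfl⟩

theorem stmt_7 :
    {m : ℕ | ∃ v w : Fin 3 → ℤ, (∑ k, v k * w k = 0) ∧
        (∑ k, v k * v k = (m : ℤ)) ∧ (∑ k, w k * w k = (m : ℤ))} =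
      {m : ℕ | ∃ a b : ℤ, a ^ 2 + b ^ 2 = (m : ℤ)} := by
  ext m
  constructor
  · rintro ⟨v, w, hvw, hv, hw⟩
    exact exists_sq_add_sq_of_dotProduct_eq_zero hvw hv hw
  · rintro ⟨a, b, hab⟩
    refine ⟨![a, b, 0], ![-b, a, 0], ?_, ?_, ?_⟩ <;>
      simp [Fin.sum_univ_three, ← hab] <;> ring
end

section
/- If m is a positive integer such that there exist three pairwise orthogonal vectors in ℚ³ each of squared Euclidean length m, then m is a perfect square. -/
/-!
If the rows of `V` are pairwise orthogonal of squared length `m`, then `V * Vᵀ = m • 1`, so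
`(det V)² = m³`. Thus `m³` is a square in `ℚ`, hence so is `m = m³ / m²`, and a natural number
that is a rational square is a square.
-/

open Matrix

theorem Matrix.mul_transpose_eq_smul_one_of_rows {n R : Type*} [Fintype n] [DecidableEq n]
    [CommSemiring R] (M : Matrix n n R) (c : R)
    (horth : ∀ i j, i ≠ j → M i ⬝ᵥ M j = 0) (hlen : ∀ i, M i ⬝ᵥ M i = c) :
    M * Mᵀ = c • 1 := by
  ext i j
  rw [mul_apply', smul_apply, one_apply]
  by_cases h : i = j
  · subst h
    simpa using hlen i
  · simpa [h] using horth i j h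

theorem Matrix.det_sq_of_mul_transpose_eq_smul_one {n R : Type*} [Fintype n] [DecidableEq n]
    [CommRing R] {M : Matrix n n R} {c : R} (h : M * Mᵀ = c • 1) :
    M.det ^ 2 = c ^ Fintype.card n := by
  simpa [sq, det_mul, det_transpose, det_smul] using congrArg det h

theorem IsSquare.of_pow_odd {K : Type*} [Field K] {x : K} {k : ℕ}
    (h : IsSquare (x ^ (2 * k + 1))) : IsSquare x := by
  rcases eq_or_ne x 0 with rfl | hx
  · exact IsSquare.zero
  obtain ⟨d, hd⟩ := h
  refine ⟨d / x ^ k, ?_⟩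
  field_simp
  rw [pow_two d, ← hd]
  ring

theorem stmt_8_general (m : ℕ) (V : Fin 3 → Fin 3 → ℚ)
    (horth : ∀ i j : Fin 3, i ≠ j → ∑ k, V i k * V j k = 0)
    (hlen : ∀ i : Fin 3, ∑ k, V i k * V i k = (m : ℚ)) :
    IsSquare m := by
  have hmul : of V * (of V)ᵀ = (m : ℚ) • 1 :=
    mul_transpose_eq_smul_one_of_rows (of V) m horth hlen
  have hdet : (of V).det ^ 2 = (m : ℚ) ^ (2 * 1 + 1) := by
    simpa using det_sq_of_mul_transpose_eq_smul_one hmul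
  rw [← Rat.isSquare_natCast_iff]
  exact IsSquare.of_pow_odd (k := 1) ⟨(of V).det, hdet.symm.trans (sq _)⟩

theorem stmt_8 (m : ℕ) (hm : 0 < m) (V : Fin 3 → Fin 3 → ℚ)
    (horth : ∀ i j : Fin 3, i ≠ j → ∑ k, V i k * V j k = 0)
    (hlen : ∀ i : Fin 3, ∑ k, V i k * V i k = (m : ℚ)) :
    IsSquare m :=
  stmt_8_general m V horth hlen
end

section
/- J(3,3) equals the set of perfect squares: a positive integer m is the squared side length of a 3-dimensional cube with vertices in ℤ³ if and only if m is a perfect square. -/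
theorem stmt_9 (m : ℕ) (hm : 0 < m) :
    (∃ V : Fin 3 → Fin 3 → ℤ,
        (∀ i j : Fin 3, i ≠ j → ∑ k, V i k * V j k = 0) ∧
        (∀ i : Fin 3, ∑ k, V i k * V i k = (m : ℤ))) ↔ IsSquare m := by
  constructor
  · rintro ⟨V, horth, hdiag⟩
    set M : Matrix (Fin 3) (Fin 3) ℤ := Matrix.of V with hM
    have hMM : M * M.transpose = (m : ℤ) • 1 := by
      ext i j
      simp only [Matrix.mul_apply, Matrix.transpose_apply, Matrix.smul_apply,
        Matrix.one_apply, hM, Matrix.of_apply]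
      by_cases h : i = j
      · subst h; simpa using hdiag i
      · simpa [h] using horth i j h
    have hdet : (M.det) ^ 2 = (m : ℤ) ^ 3 := by
      have h := congrArg Matrix.det hMM
      rw [Matrix.det_mul, Matrix.det_transpose, Matrix.det_smul, Matrix.det_one,
        Fintype.card_fin] at h
      rw [sq, h]; ring
    have hnat : (M.det.natAbs) ^ 2 = m ^ 3 := by
      have := congrArg Int.natAbs hdet
      simpa [Int.natAbs_pow] using this
    set d := M.det.natAbs with hd
    have hmd : m ∣ d := by
      have h2 : m ^ 2 ∣ d ^ 2 := by
        rw [hnat]; exact pow_dvd_pow m (by norm_num)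
      exact (Nat.pow_dvd_pow_iff (by norm_num)).mp h2
    obtain ⟨e, he⟩ := hmd
    have : m ^ 2 * e ^ 2 = m ^ 2 * m := by
      have := hnat
      rw [he] at this
      ring_nf at this ⊢
      linarith [this]
    have he2 : e ^ 2 = m := Nat.eq_of_mul_eq_mul_left (by positivity) this
    exact ⟨e, by rw [← he2]; ring⟩
  · rintro ⟨k, rfl⟩
    refine ⟨fun i j => if i = j then (k : ℤ) else 0, ?_, ?_⟩
    · intro i j hij
      fin_cases i <;> fin_cases j <;> simp_all [Fin.sum_univ_three]
    · intro i
      fin_cases i <;> simp [Fin.sum_univ_three]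
end

section
/- For all n ≥ d ≥ 1, J(d,n) ⊆ J(d+4, n+4): if there exist d pairwise orthogonal vectors in ℤⁿ of squared length m, then there exist d+4 pairwise orthogonal vectors in ℤ^{n+4} of squared length m. -/
theorem stmt_10 (d n : ℕ) (hd : 1 ≤ d) (hdn : d ≤ n) (m : ℕ)
    (h : ∃ V : Fin d → Fin n → ℤ,
        (∀ i j, i ≠ j → ∑ k, V i k * V j k = 0) ∧
        (∀ i, ∑ k, V i k * V i k = (m : ℤ))) :
    ∃ W : Fin (d + 4) → Fin (n + 4) → ℤ,
        (∀ i j, i ≠ j → ∑ k, W i k * W j k = 0) ∧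
        (∀ i, ∑ k, W i k * W i k = (m : ℤ)) := by
  obtain ⟨V, hV1, hV2⟩ := h
  obtain ⟨a, b, c, e, habcd⟩ := Nat.sum_four_squares m
  set A : ℤ := (a : ℤ)
  set B : ℤ := (b : ℤ)
  set C : ℤ := (c : ℤ)
  set D : ℤ := (e : ℤ)
  have hm : A ^ 2 + B ^ 2 + C ^ 2 + D ^ 2 = (m : ℤ) := by
    simp only [A, B, C, D]
    push_cast [← habcd]
    ring
  set Q : Fin 4 → Fin 4 → ℤ :=
    ![![A, B, C, D], ![-B, A, -D, C], ![-C, D, A, -B], ![-D, -C, B, A]] with hQ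
  have hcase : ∀ i : Fin (d + 4),
      (∃ j, i = Fin.castAdd 4 j) ∨ (∃ j, i = Fin.natAdd d j) :=
    fun i => Fin.addCases (fun j => Or.inl ⟨j, rfl⟩) (fun j => Or.inr ⟨j, rfl⟩) i
  refine ⟨fun i => Fin.addCases (fun i' => Fin.addCases (V i') (fun _ => 0))
      (fun i' => Fin.addCases (fun _ => 0) (Q i')) i, ?_, ?_⟩
  · intro i j hij
    rcases hcase i with ⟨i', rfl⟩ | ⟨i', rfl⟩ <;> rcases hcase j with ⟨j', rfl⟩ | ⟨j', rfl⟩ <;>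
      rw [Fin.sum_univ_add] <;>
      simp only [Fin.addCases_left, Fin.addCases_right, mul_zero, zero_mul,
        Finset.sum_const_zero, add_zero, zero_add]
    · exact hV1 i' j' (fun hh => hij (by rw [hh]))
    · have hij' : i' ≠ j' := fun hh => hij (by rw [hh])
      rw [Fin.sum_univ_four]
      fin_cases i' <;> fin_cases j' <;> first
        | exact absurd rfl hij'
        | (simp only [hQ]; simp; ring)
  · intro i
    rcases hcase i with ⟨i', rfl⟩ | ⟨i', rfl⟩ <;>
      rw [Fin.sum_univ_add] <;>
      simp only [Fin.addCases_left, Fin.addCases_right, mul_zero, zero_mul,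
        Finset.sum_const_zero, add_zero, zero_add]
    · exact hV2 i'
    · rw [Fin.sum_univ_four]
      fin_cases i' <;> (simp only [hQ]; simp; linarith [hm])
end

section
/- For all n ≥ d ≥ 1, J^ℚ(d+4, n+4) ⊆ J^ℚ(d, n): if there exist d+4 pairwise orthogonal vectors in ℚ^{n+4} each of squared length m, then there exist d pairwise orthogonal vectors in ℚⁿ each of squared length m. -/
/-!
Write `m = a² + b² + c² + d²`. The matrix `Q` of left multiplication by the quaternion
`a + bi + cj + dk` satisfies `Q Qᵀ = m • 1`, so `m⁻¹ Q` turns four of the given vectors into four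
orthonormal vectors with the same span (the isometry `4⟨m⟩ ≃ 4⟨1⟩`), and the other `d` vectors
are orthogonal to them. Witt cancellation of a unit vector `u` is then elementary: at most two
hyperplane reflections carry `u` to the first standard basis vector, after which every vector
orthogonal to `u` has first coordinate `0` and may be truncated without changing any dot product.
Cancelling the four unit vectors leaves `d` vectors in `ℚⁿ` whose Gram matrix is still `m • 1`.
-/

namespace Matrix

section Reflection

variable {K : Type*} [Field K] {n : Type*} [Fintype n]

def reflection (u x : n → K) : n → K := x - (2 * (x ⬝ᵥ u) / (u ⬝ᵥ u)) • u

theorem reflection_dotProduct_reflection {u : n → K} (hu : u ⬝ᵥ u ≠ 0) (x y : n → K) :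
    reflection u x ⬝ᵥ reflection u y = x ⬝ᵥ y := by
  simp only [reflection, sub_dotProduct, dotProduct_sub, smul_dotProduct, dotProduct_smul,
    smul_eq_mul, dotProduct_comm u y]
  field_simp
  ring

theorem reflection_sub_apply_eq {x y : n → K} (hxy : x ⬝ᵥ x = y ⬝ᵥ y)
    (h : (x - y) ⬝ᵥ (x - y) ≠ 0) : reflection (x - y) x = y := by
  have hxxy : (x - y) ⬝ᵥ (x - y) = 2 * (x ⬝ᵥ (x - y)) := by
    simp only [sub_dotProduct, dotProduct_sub, dotProduct_comm y x, hxy]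
    ring
  rw [reflection, ← hxxy, div_self h, one_smul, sub_sub_cancel]

theorem exists_isometry_apply_eq [NeZero (2 : K)] {x y : n → K} (hxy : x ⬝ᵥ x = y ⬝ᵥ y)
    (hx : x ⬝ᵥ x ≠ 0) :
    ∃ T : (n → K) → n → K, (∀ a b, T a ⬝ᵥ T b = a ⬝ᵥ b) ∧ T x = y := by
  obtain h | h := ne_or_eq ((x - y) ⬝ᵥ (x - y)) 0
  · exact ⟨reflection (x - y), reflection_dotProduct_reflection h,
      reflection_sub_apply_eq hxy h⟩
  -- `x - y` is isotropic: reflect `x` to `-y`, then `-y` to `y`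
  have h4 : (4 : K) ≠ 0 := by
    rw [show (4 : K) = 2 * 2 by norm_num]
    exact mul_ne_zero two_ne_zero two_ne_zero
  have h₁ : (x - -y) ⬝ᵥ (x - -y) ≠ 0 := by
    have : (x - y) ⬝ᵥ (x - y) + (x - -y) ⬝ᵥ (x - -y) = 4 * (x ⬝ᵥ x) := by
      simp only [sub_dotProduct, dotProduct_sub, neg_dotProduct, dotProduct_neg,
        dotProduct_comm y x, ← hxy]
      ring
    rw [h, zero_add] at this
    rw [this]
    exact mul_ne_zero h4 hx
  have h₂ : (-y - y) ⬝ᵥ (-y - y) ≠ 0 := by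
    have : (-y - y) ⬝ᵥ (-y - y) = 4 * (x ⬝ᵥ x) := by
      simp only [sub_dotProduct, dotProduct_sub, neg_dotProduct, dotProduct_neg, hxy]
      ring
    rw [this]
    exact mul_ne_zero h4 hx
  refine ⟨reflection (-y - y) ∘ reflection (x - -y), fun a b => ?_, ?_⟩
  · simp only [Function.comp_apply, reflection_dotProduct_reflection h₁,
      reflection_dotProduct_reflection h₂]
  · rw [Function.comp_apply, reflection_sub_apply_eq (by simpa using hxy) h₁,
      reflection_sub_apply_eq (by simp) h₂]

end Reflection

theorem submatrix_id_mul_transpose_submatrix_id {l m o n α : Type*} [Fintype n] [Mul α]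
    [AddCommMonoid α] (A : Matrix m n α) (f : l → m) (g : o → m) :
    A.submatrix f id * (A.submatrix g id)ᵀ = (A * Aᵀ).submatrix f g :=
  rfl

theorem submatrix_smul_one {l m α : Type*} [MulZeroOneClass α] [DecidableEq l] [DecidableEq m]
    {f : l → m} (hf : Function.Injective f) (c : α) :
    (c • (1 : Matrix m m α)).submatrix f f = c • 1 := by
  ext i j
  simp [one_apply, hf.eq_iff]

theorem mul_transpose_eq_smul_one_iff {m n α : Type*} [Fintype n] [DecidableEq m] [CommRing α]
    (A : Matrix m n α) (c : α) :
    A * Aᵀ = c • 1 ↔ (∀ i j, i ≠ j → ∑ k, A i k * A j k = 0) ∧ ∀ i, ∑ k, A i k * A i k = c := by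
  constructor
  · intro h
    exact ⟨fun i j hij => by simpa [mul_apply, hij] using congrFun₂ h i j,
      fun i => by simpa [mul_apply] using congrFun₂ h i i⟩
  · rintro ⟨h₀, h₁⟩
    ext i j
    rcases eq_or_ne i j with rfl | hij
    · simp [mul_apply, h₁]
    · simp [mul_apply, hij, h₀]

section Cancellation

variable {K : Type*} [Field K] [NeZero (2 : K)] {N : ℕ}

theorem exists_mul_transpose_eq_of_mulVec_eq_zero {ι : Type*} (R : Matrix ι (Fin (N + 1)) K)
    {u : Fin (N + 1) → K} (hu : u ⬝ᵥ u = 1) (hRu : R *ᵥ u = 0) :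
    ∃ W : Matrix ι (Fin N) K, W * Wᵀ = R * Rᵀ := by
  obtain ⟨T, hT, hTu⟩ := exists_isometry_apply_eq (x := u) (y := Pi.single 0 1)
    (by rw [hu, single_one_dotProduct, Pi.single_eq_same]) (by rw [hu]; exact one_ne_zero)
  have hT0 : ∀ i, T (R i) 0 = 0 := fun i => by
    rw [← mul_one (T (R i) 0), ← dotProduct_single, ← hTu, hT]
    exact congrFun hRu i
  refine ⟨of fun i k => T (R i) k.succ, ?_⟩
  ext i j
  calc ∑ k : Fin N, T (R i) k.succ * T (R j) k.succ
      = T (R i) ⬝ᵥ T (R j) := by rw [dotProduct, Fin.sum_univ_succ, hT0, zero_mul, zero_add]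
    _ = (R * Rᵀ) i j := hT _ _

theorem exists_mul_transpose_eq_of_orthonormal {ι : Type*} (t : ℕ) (R : Matrix ι (Fin (N + t)) K)
    (U : Matrix (Fin t) (Fin (N + t)) K) (hU : U * Uᵀ = 1) (hRU : R * Uᵀ = 0) :
    ∃ W : Matrix ι (Fin N) K, W * Wᵀ = R * Rᵀ := by
  induction t generalizing ι with
  | zero => exact ⟨R, rfl⟩
  | succ t ih =>
    -- cancel the last row of `U` from the rows of `R` together with the other rows of `U`
    let S : Matrix (ι ⊕ Fin t) (Fin (N + t + 1)) K := fromRows R (U.submatrix Fin.castSucc id)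
    have hSu : S *ᵥ U (Fin.last t) = 0 := by
      ext (i | j)
      · exact congrFun₂ hRU i (Fin.last t)
      · exact (congrFun₂ hU _ _).trans (one_apply_ne (Fin.castSucc_lt_last j).ne)
    obtain ⟨W, hW⟩ := exists_mul_transpose_eq_of_mulVec_eq_zero S
      ((congrFun₂ hU _ _).trans (one_apply_eq _)) hSu
    obtain ⟨W', hW'⟩ := ih (W.submatrix Sum.inl id) (W.submatrix Sum.inr id)
      (calc (W * Wᵀ).submatrix Sum.inr Sum.inr
            = (U * Uᵀ).submatrix Fin.castSucc Fin.castSucc := by rw [hW]; rfl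
          _ = 1 := by rw [hU]; exact submatrix_one _ (Fin.castSucc_injective t))
      (calc (W * Wᵀ).submatrix Sum.inl Sum.inr
            = (R * Uᵀ).submatrix id Fin.castSucc := by rw [hW]; rfl
          _ = 0 := by rw [hRU]; rfl)
    exact ⟨W', hW'.trans (by rw [submatrix_id_mul_transpose_submatrix_id, hW]; rfl)⟩

end Cancellation

def quaternionMatrix {R : Type*} [Neg R] (a b c d : R) : Matrix (Fin 4) (Fin 4) R :=
  !![a, b, c, d; -b, a, -d, c; -c, d, a, -b; -d, -c, b, a]

theorem quaternionMatrix_mul_transpose {R : Type*} [CommRing R] (a b c d : R) :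
    quaternionMatrix a b c d * (quaternionMatrix a b c d)ᵀ =
      (a ^ 2 + b ^ 2 + c ^ 2 + d ^ 2) • 1 := by
  ext i j
  fin_cases i <;> fin_cases j <;>
    simp [quaternionMatrix, mul_apply, Fin.sum_univ_four] <;> ring

theorem exists_mul_transpose_eq_smul_one_of_sum_four_sq {K : Type*} [Field K] [NeZero (2 : K)]
    {ι : Type*} [DecidableEq ι] {N : ℕ} {a b c d : K} (hm : a ^ 2 + b ^ 2 + c ^ 2 + d ^ 2 ≠ 0)
    (V : Matrix (ι ⊕ Fin 4) (Fin (N + 4)) K) (hV : V * Vᵀ = (a ^ 2 + b ^ 2 + c ^ 2 + d ^ 2) • 1) :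
    ∃ W : Matrix ι (Fin N) K, W * Wᵀ = (a ^ 2 + b ^ 2 + c ^ 2 + d ^ 2) • 1 := by
  set m := a ^ 2 + b ^ 2 + c ^ 2 + d ^ 2
  have hV₁ : V.submatrix Sum.inl id * (V.submatrix Sum.inl id)ᵀ = m • 1 := by
    rw [submatrix_id_mul_transpose_submatrix_id, hV, submatrix_smul_one Sum.inl_injective]
  have hV₂ : V.submatrix Sum.inr id * (V.submatrix Sum.inr id)ᵀ = m • 1 := by
    rw [submatrix_id_mul_transpose_submatrix_id, hV, submatrix_smul_one Sum.inr_injective]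
  have hV₁₂ : V.submatrix Sum.inl id * (V.submatrix Sum.inr id)ᵀ = 0 := by
    rw [submatrix_id_mul_transpose_submatrix_id, hV]
    ext i j
    simp
  let U := (m⁻¹ • quaternionMatrix a b c d) * V.submatrix Sum.inr id
  have hU : U * Uᵀ = 1 := by
    rw [transpose_mul, Matrix.mul_assoc, ← Matrix.mul_assoc (V.submatrix _ _), hV₂]
    simp only [transpose_smul, Matrix.smul_mul, Matrix.mul_smul, Matrix.one_mul,
      quaternionMatrix_mul_transpose, smul_smul]
    rw [inv_mul_cancel₀ hm, one_mul, one_smul]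
  have hRU : V.submatrix Sum.inl id * Uᵀ = 0 := by
    rw [transpose_mul, ← Matrix.mul_assoc, hV₁₂, Matrix.zero_mul]
  obtain ⟨W, hW⟩ := exists_mul_transpose_eq_of_orthonormal 4 _ U hU hRU
  exact ⟨W, hW.trans hV₁⟩

end Matrix

theorem stmt_11_general (d n : ℕ) (m : ℕ) (hm : 0 < m)
    (h : ∃ V : Fin (d + 4) → Fin (n + 4) → ℚ,
        (∀ i j, i ≠ j → ∑ k, V i k * V j k = 0) ∧
        (∀ i, ∑ k, V i k * V i k = (m : ℚ))) :
    ∃ W : Fin d → Fin n → ℚ,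
        (∀ i j, i ≠ j → ∑ k, W i k * W j k = 0) ∧
        (∀ i, ∑ k, W i k * W i k = (m : ℚ)) := by
  obtain ⟨V, hV⟩ := h
  obtain ⟨a, b, c, e, habce⟩ := Nat.sum_four_squares m
  have hsq : (a ^ 2 + b ^ 2 + c ^ 2 + e ^ 2 : ℚ) = m := by exact_mod_cast habce
  have hV' := (Matrix.mul_transpose_eq_smul_one_iff (Matrix.of V) (m : ℚ)).2 hV
  rw [← hsq] at hV'
  obtain ⟨W, hW⟩ := Matrix.exists_mul_transpose_eq_smul_one_of_sum_four_sq (ι := Fin d)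
    (hsq ▸ Nat.cast_ne_zero.2 hm.ne') ((Matrix.of V).submatrix finSumFinEquiv id)
    (by rw [Matrix.submatrix_id_mul_transpose_submatrix_id, hV',
      Matrix.submatrix_smul_one finSumFinEquiv.injective])
  exact ⟨W, (Matrix.mul_transpose_eq_smul_one_iff W (m : ℚ)).1 (hsq ▸ hW)⟩

theorem stmt_11 (d n : ℕ) (hd : 1 ≤ d) (hdn : d ≤ n) (m : ℕ) (hm : 0 < m)
    (h : ∃ V : Fin (d + 4) → Fin (n + 4) → ℚ,
        (∀ i j, i ≠ j → ∑ k, V i k * V j k = 0) ∧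
        (∀ i, ∑ k, V i k * V i k = (m : ℚ))) :
    ∃ W : Fin d → Fin n → ℚ,
        (∀ i j, i ≠ j → ∑ k, W i k * W j k = 0) ∧
        (∀ i, ∑ k, W i k * W i k = (m : ℚ)) :=
  stmt_11_general d n m hm h
end

section
/- For 1 ≤ d ≤ 4 ≤ n, J(d,n) = ℕ, that is, for every positive integer m there exist d pairwise orthogonal vectors in ℤⁿ each of squared length m. -/
def quatMat (a b c d : ℤ) : Matrix (Fin 4) (Fin 4) ℤ :=
  !![a, b, c, d; -b, a, -d, c; -c, d, a, -b; -d, -c, b, a]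

lemma quatMat_orth (a b c d : ℤ) (i j : Fin 4) (hij : i ≠ j) :
    ∑ k : Fin 4, quatMat a b c d i k * quatMat a b c d j k = 0 := by
  fin_cases i <;> fin_cases j <;>
    first
      | exact absurd rfl hij
      | (simp [quatMat, Fin.sum_univ_four]; ring)

lemma quatMat_norm (a b c d : ℤ) (i : Fin 4) :
    ∑ k : Fin 4, quatMat a b c d i k * quatMat a b c d i k
      = a ^ 2 + b ^ 2 + c ^ 2 + d ^ 2 := by
  fin_cases i <;> (simp [quatMat, Fin.sum_univ_four]; ring)

lemma sum_pad {n : ℕ} (hn : 4 ≤ n) (F : Fin 4 → ℤ) :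
    ∑ k : Fin n, (if h : (k : ℕ) < 4 then F ⟨k, h⟩ else 0) = ∑ k : Fin 4, F k := by
  have h1 : ∑ k : Fin n, (if h : (k : ℕ) < 4 then F ⟨k, h⟩ else 0)
      = ∑ k ∈ Finset.range n, (if h : k < 4 then F ⟨k, h⟩ else 0) :=
    Fin.sum_univ_eq_sum_range (fun k => if h : k < 4 then F ⟨k, h⟩ else 0) n
  have h2 : ∑ k : Fin 4, (if h : (k : ℕ) < 4 then F ⟨k, h⟩ else 0)
      = ∑ k ∈ Finset.range 4, (if h : k < 4 then F ⟨k, h⟩ else 0) :=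
    Fin.sum_univ_eq_sum_range (fun k => if h : k < 4 then F ⟨k, h⟩ else 0) 4
  have h3 : ∑ k ∈ Finset.range 4, (if h : k < 4 then F ⟨k, h⟩ else 0)
      = ∑ k ∈ Finset.range n, (if h : k < 4 then F ⟨k, h⟩ else 0) :=
    Finset.sum_subset (Finset.range_subset_range.2 hn)
      (fun x _ hx => dif_neg (by simpa using hx))
  rw [h1, ← h3, ← h2]
  apply Finset.sum_congr rfl
  intro x _
  simp [x.isLt]

theorem stmt_12 (d n m : ℕ) (hd : 1 ≤ d) (hd4 : d ≤ 4) (hn : 4 ≤ n) (hm : 0 < m) :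
    ∃ V : Fin d → Fin n → ℤ,
        (∀ i j, i ≠ j → ∑ k, V i k * V j k = 0) ∧
        (∀ i, ∑ k, V i k * V i k = (m : ℤ)) := by
  obtain ⟨a, b, c, e, habcd⟩ := Nat.sum_four_squares m
  set M : Matrix (Fin 4) (Fin 4) ℤ := quatMat (a : ℤ) (b : ℤ) (c : ℤ) (e : ℤ) with hM
  refine ⟨fun i k => if h : (k : ℕ) < 4 then M (Fin.castLE hd4 i) ⟨k, h⟩ else 0, ?_, ?_⟩
  · intro i j hij
    have hprod : ∀ k : Fin n,
        (if h : (k : ℕ) < 4 then M (Fin.castLE hd4 i) ⟨k, h⟩ else 0) *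
          (if h : (k : ℕ) < 4 then M (Fin.castLE hd4 j) ⟨k, h⟩ else 0)
        = if h : (k : ℕ) < 4
            then M (Fin.castLE hd4 i) ⟨k, h⟩ * M (Fin.castLE hd4 j) ⟨k, h⟩ else 0 := by
      intro k; by_cases h : (k : ℕ) < 4 <;> simp [h]
    simp only [hprod]
    exact (sum_pad hn fun k => M (Fin.castLE hd4 i) k * M (Fin.castLE hd4 j) k).trans
      (quatMat_orth _ _ _ _ _ _ (fun h => hij (Fin.castLE_injective hd4 h)))
  · intro i
    have hprod : ∀ k : Fin n,
        (if h : (k : ℕ) < 4 then M (Fin.castLE hd4 i) ⟨k, h⟩ else 0) *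
          (if h : (k : ℕ) < 4 then M (Fin.castLE hd4 i) ⟨k, h⟩ else 0)
        = if h : (k : ℕ) < 4
            then M (Fin.castLE hd4 i) ⟨k, h⟩ * M (Fin.castLE hd4 i) ⟨k, h⟩ else 0 := by
      intro k; by_cases h : (k : ℕ) < 4 <;> simp [h]
    simp only [hprod]
    refine (sum_pad hn fun k => M (Fin.castLE hd4 i) k * M (Fin.castLE hd4 i) k).trans ?_
    rw [hM, quatMat_norm]
    push_cast [← habcd]
    ring
end

section
/- Suppose a,b,c,d,e,f ∈ ℚ satisfy a²+b²+c² = m, d²+e²+f² = m, ad+be+cf = 0, and bd − ae ≠ m. Then m = (m(d−b)/(bd−ae−m))² + (m(a+e)/(bd−ae−m))², i.e., m is explicitly a sum of two rational squares. -/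
/-!
If `u = (a, b, c)` and `v = (d, e, f)` are orthogonal with `|u|² = |v|² = m`, the
Brahmagupta–Fibonacci identity applied to the first two coordinates gives
`(bd - ae)² = (m - c²)(m - f²) - (cf)² = m² - m(c² + f²)`. Expanding, this is exactly
`(bd - ae - m)² = m((d - b)² + (a + e)²)`, and dividing by `(bd - ae - m)²` exhibits `m`
as a sum of two squares.
-/

section Orthogonal

variable {R : Type*} [CommRing R] {a b c d e f m : R}

theorem sq_mul_sub_mul_of_orthogonal (h1 : a ^ 2 + b ^ 2 + c ^ 2 = m)
    (h2 : d ^ 2 + e ^ 2 + f ^ 2 = m) (h3 : a * d + b * e + c * f = 0) :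
    (b * d - a * e) ^ 2 = m ^ 2 - m * (c ^ 2 + f ^ 2) := by
  have brahmagupta := sq_add_sq_mul_sq_add_sq (x₁ := a) (x₂ := b) (y₁ := e) (y₂ := d)
  rw [show a ^ 2 + b ^ 2 = m - c ^ 2 by rw [← h1]; ring,
    show e ^ 2 + d ^ 2 = m - f ^ 2 by rw [← h2]; ring,
    show a * d + b * e = -(c * f) by rw [← sub_eq_zero, ← h3]; ring] at brahmagupta
  linear_combination -brahmagupta

theorem sq_mul_sub_mul_sub_eq_mul_sq_add_sq_of_orthogonal (h1 : a ^ 2 + b ^ 2 + c ^ 2 = m)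
    (h2 : d ^ 2 + e ^ 2 + f ^ 2 = m) (h3 : a * d + b * e + c * f = 0) :
    (b * d - a * e - m) ^ 2 = m * ((d - b) ^ 2 + (a + e) ^ 2) := by
  linear_combination sq_mul_sub_mul_of_orthogonal h1 h2 h3 - m * h1 - m * h2

end Orthogonal

theorem eq_div_sq_add_div_sq_of_sq_eq_mul {K : Type*} [Field K] {m x y t : K} (ht : t ≠ 0)
    (h : t ^ 2 = m * (x ^ 2 + y ^ 2)) :
    m = (m * x / t) ^ 2 + (m * y / t) ^ 2 := by
  field_simp
  linear_combination m * h

theorem stmt_14 (a b c d e f m : ℚ)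
    (h1 : a ^ 2 + b ^ 2 + c ^ 2 = m) (h2 : d ^ 2 + e ^ 2 + f ^ 2 = m)
    (h3 : a * d + b * e + c * f = 0) (h4 : b * d - a * e ≠ m) :
    m = (m * (d - b) / (b * d - a * e - m)) ^ 2 +
        (m * (a + e) / (b * d - a * e - m)) ^ 2 :=
  eq_div_sq_add_div_sq_of_sq_eq_mul (sub_ne_zero.mpr h4)
    (sq_mul_sub_mul_sub_eq_mul_sq_add_sq_of_orthogonal h1 h2 h3)
end
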